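/- arXiv:1604.06869 — 4 statements merged into one kernel-verified Lean document; each statement's English description precedes it below -/
import Mathlib

section
/- For every constant c ∈ ℂ, the entire function τ(x) = [⟨x,x⟩/(2δ) + c] (x ∈ V) is an ORG τ-function on V; that is, for every C_3-frame {±a,±b,±c'} relative to P and every x ∈ V, [⟨b+c',x⟩][⟨b−c',x⟩]τ(x+aδ)τ(x−aδ) + [⟨c'+a,x⟩][⟨c'−a,x⟩]τ(x+bδ)τ(x−bδ) + [⟨a+b,x⟩][⟨a−b,x⟩]τ(x+c'δ)τ(x−c'δ) = 0. -/
noncomputable section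

/-- `V = ℂ^8`. -/
abbrev V8 : Type := Fin 8 → ℂ

/-- The symmetric bilinear form `⟨x,y⟩ = ∑ᵢ xᵢ yᵢ` on `V`. -/
def ip (x y : V8) : ℂ := ∑ i, x i * y i

/-- `φ = (1/2, …, 1/2)`. -/
def phi8 : V8 := fun _ => (1 : ℂ) / 2

/-- `x` has all coordinates in `ℤ`. -/
def IsIntVec (x : V8) : Prop := ∀ i, ∃ n : ℤ, x i = (n : ℂ)

/-- The `E₈` root lattice `P = {a ∈ ℤ⁸ ∪ (φ + ℤ⁸) : ⟨φ,a⟩ ∈ ℤ}`. -/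
def E8lat : Set V8 :=
  {a | (IsIntVec a ∨ IsIntVec (a - phi8)) ∧ ∃ n : ℤ, ip phi8 a = (n : ℂ)}

/-- A `C_l`-frame relative to `P`: a set `A = {±a₀, …, ±a_{l-1}}` with
`⟨aᵢ,aⱼ⟩ = δᵢⱼ`, `aᵢ ± aⱼ ∈ P` for `i < j`, and `2aᵢ ∈ P`. -/
def IsClFrame (l : ℕ) (A : Set V8) : Prop :=
  ∃ a : Fin l → V8,
    A = Set.range a ∪ Set.range (fun i => -a i) ∧
    (∀ i j, ip (a i) (a j) = if i = j then 1 else 0) ∧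
    (∀ i j, i < j → a i + a j ∈ E8lat ∧ a i - a j ∈ E8lat) ∧
    (∀ i, (2 : ℂ) • a i ∈ E8lat)

/-- The three-term relation `[β±γ][z±α] + [γ±α][z±β] + [α±β][z±γ] = 0`. -/
def ThreeTermRel (br : ℂ → ℂ) : Prop :=
  ∀ z α β γ : ℂ,
    br (β + γ) * br (β - γ) * (br (z + α) * br (z - α)) +
      br (γ + α) * br (γ - α) * (br (z + β) * br (z - β)) +
      br (α + β) * br (α - β) * (br (z + γ) * br (z - γ)) = 0

/-- `(a,b,c)` is a triple such that `{±a, ±b, ±c}` is a `C₃`-frame relative to `P`. -/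
def IsC3Triple (a b c : V8) : Prop :=
  ip a a = 1 ∧ ip b b = 1 ∧ ip c c = 1 ∧
  ip a b = 0 ∧ ip a c = 0 ∧ ip b c = 0 ∧
  a + b ∈ E8lat ∧ a - b ∈ E8lat ∧ a + c ∈ E8lat ∧ a - c ∈ E8lat ∧
  b + c ∈ E8lat ∧ b - c ∈ E8lat ∧
  (2 : ℂ) • a ∈ E8lat ∧ (2 : ℂ) • b ∈ E8lat ∧ (2 : ℂ) • c ∈ E8lat

/-- The non-autonomous Hirota equation `H(a,b,c)` at the point `x`. -/
def HirotaEq (br : ℂ → ℂ) (δ : ℂ) (τ : V8 → ℂ) (a b c x : V8) : Prop :=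
  br (ip (b + c) x) * br (ip (b - c) x) * (τ (x + δ • a) * τ (x - δ • a)) +
    br (ip (c + a) x) * br (ip (c - a) x) * (τ (x + δ • b) * τ (x - δ • b)) +
    br (ip (a + b) x) * br (ip (a - b) x) * (τ (x + δ • c) * τ (x - δ • c)) = 0

/-- `τ` is an ORG τ-function on `D`: the Hirota equation holds for every
`C₃`-frame `{±a,±b,±c}` and every `x` whose six shifts lie in `D`. -/
def IsORGTau (br : ℂ → ℂ) (δ : ℂ) (D : Set V8) (τ : V8 → ℂ) : Prop :=
  ∀ a b c : V8, IsC3Triple a b c → ∀ x : V8,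
    x + δ • a ∈ D → x - δ • a ∈ D → x + δ • b ∈ D → x - δ • b ∈ D →
    x + δ • c ∈ D → x - δ • c ∈ D → HirotaEq br δ τ a b c x

/-- `D + Pδ = D`. -/
def PShiftInvariant (δ : ℂ) (D : Set V8) : Prop :=
  ∀ v ∈ E8lat, ∀ x ∈ D, x + δ • v ∈ D

/-- `e(z) = exp(2π√−1 z)`. -/
def eFun (z : ℂ) : ℂ := Complex.exp (2 * (Real.pi : ℂ) * Complex.I * z)

/-
The squared norm is quadratic, so for a unit vector `v` the shift `x ↦ x ± δ v` moves
`⟨x,x⟩/(2δ) + c` to `z ± ⟨v,x⟩` with `z = ⟨x,x⟩/(2δ) + c + δ/2` independent of `v`. Since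
`⟨b ± c, x⟩ = ⟨b,x⟩ ± ⟨c,x⟩`, the Hirota equation at `x` becomes the three-term relation at
`(z, ⟨a,x⟩, ⟨b,x⟩, ⟨c,x⟩)`.
-/

lemma ip_eq_dotProduct (x y : V8) : ip x y = x ⬝ᵥ y := rfl

lemma ip_add_smul_self (x v : V8) (t : ℂ) :
    ip (x + t • v) (x + t • v) = ip x x + 2 * t * ip v x + t ^ 2 * ip v v := by
  simp only [ip_eq_dotProduct, add_dotProduct, dotProduct_add, smul_dotProduct,
    dotProduct_smul, dotProduct_comm x v, smul_eq_mul]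
  ring

lemma quadratic_add_smul_of_unit {δ : ℂ} (hδ : δ ≠ 0) {v : V8} (hv : ip v v = 1) (x : V8)
    (c : ℂ) :
    ip (x + δ • v) (x + δ • v) / (2 * δ) + c = (ip x x / (2 * δ) + c + δ / 2) + ip v x := by
  rw [ip_add_smul_self, hv]
  field_simp
  ring

lemma quadratic_sub_smul_of_unit {δ : ℂ} (hδ : δ ≠ 0) {v : V8} (hv : ip v v = 1) (x : V8)
    (c : ℂ) :
    ip (x - δ • v) (x - δ • v) / (2 * δ) + c = (ip x x / (2 * δ) + c + δ / 2) - ip v x := by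
  have hnv : ip (-v) (-v) = 1 := by rwa [ip_eq_dotProduct, neg_dotProduct, dotProduct_neg, neg_neg]
  rw [sub_eq_add_neg x, ← smul_neg, quadratic_add_smul_of_unit hδ hnv, ip_eq_dotProduct (-v),
    neg_dotProduct, ← ip_eq_dotProduct, sub_eq_add_neg]

lemma hirotaEq_of_threeTermRel {br : ℂ → ℂ} (hbr3 : ThreeTermRel br) {δ : ℂ} {τ : V8 → ℂ}
    {a b c x : V8} (z : ℂ)
    (hτ : ∀ v ∈ ({a, b, c} : Set V8),
      τ (x + δ • v) = br (z + ip v x) ∧ τ (x - δ • v) = br (z - ip v x)) :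
    HirotaEq br δ τ a b c x := by
  simp only [Set.mem_insert_iff, Set.mem_singleton_iff, forall_eq_or_imp, forall_eq] at hτ
  obtain ⟨⟨hap, ham⟩, ⟨hbp, hbm⟩, ⟨hcp, hcm⟩⟩ := hτ
  simp only [HirotaEq, hap, ham, hbp, hbm, hcp, hcm, ip_eq_dotProduct, add_dotProduct,
    sub_dotProduct]
  exact hbr3 z _ _ _

theorem statement2_general (br : ℂ → ℂ)
    (hbr3 : ThreeTermRel br) (δ : ℂ) (hδ : δ ≠ 0) (c : ℂ) :
    IsORGTau br δ Set.univ (fun x => br (ip x x / (2 * δ) + c)) := by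
  rintro a b c' ⟨ha, hb, hc, -⟩ x - - - - - -
  refine hirotaEq_of_threeTermRel hbr3 (ip x x / (2 * δ) + c + δ / 2) fun v hv => ?_
  have hunit : ip v v = 1 := by
    simp only [Set.mem_insert_iff, Set.mem_singleton_iff] at hv
    rcases hv with rfl | rfl | rfl <;> assumption
  exact ⟨congrArg br (quadratic_add_smul_of_unit hδ hunit x c),
    congrArg br (quadratic_sub_smul_of_unit hδ hunit x c)⟩

/-- Proposition 2.3: the canonical solution `τ(x) = [⟨x,x⟩/(2δ) + c]` is an
ORG τ-function on all of `V`. -/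
theorem statement2 (br : ℂ → ℂ) (hbr_ne : br ≠ 0) (hbr_ent : Differentiable ℂ br)
    (hbr3 : ThreeTermRel br) (δ : ℂ) (hδ : δ ≠ 0) (c : ℂ) :
    IsORGTau br δ Set.univ (fun x => br (ip x x / (2 * δ) + c)) :=
  statement2_general br hbr3 δ hδ c
end
end

section
/- Let D ⊆ V with D + Pδ = D and let τ be an ORG τ-function on D. Let ω ∈ ℂ, η ∈ ℂ and ε ∈ {1,−1} be such that [ζ+ω] = ε·e(η(ζ+ω/2))·[ζ] for all ζ ∈ ℂ (a quasi-period of [·]), where e(z) = exp(2π√−1 z). Then for every v ∈ P, the function τ̃(x) = e(S(x;v,ω))·τ(x−vω), where S(x;v,ω) = (η/(2δ²))·⟨v,x⟩·⟨x,x−vω⟩, is an ORG τ-function on D + vω. -/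
noncomputable section

/-!
Iterating the quasi-periodicity gives `[ζ + nω] = ε ^ n e(η(nζ + n²ω/2)) [ζ]` for all `n ∈ ℤ`.
Since `P` is integral and `v ∈ P`, each bracket `[⟨u ± w, x⟩]` of the Hirota equation at `x`
is such a shift of the bracket at `x - vω`, with `n = ⟨u ± w, v⟩`. Combined with the gauge
factors `e(S(x ± δm))`, each of the three terms of `H(a, b, c)` for `τ̃` at `x` becomes the
corresponding term for `τ` at `x - vω` times `ε ^ (2⟨u, v⟩)` and an exponential whose argument
is symmetric in `a, b, c`. The signs agree because `⟨b - c, v⟩, ⟨a - b, v⟩ ∈ ℤ`, so the whole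
equation is multiplied by one common factor.
-/

lemma zpow_eq_zpow_of_even_sub {K : Type*} [DivisionRing K] {ε : K} (hε : ε = 1 ∨ ε = -1)
    {s t : ℤ} (h : Even (s - t)) : ε ^ s = ε ^ t := by
  rcases hε with rfl | rfl
  · simp
  · rw [← sub_add_cancel s t, zpow_add₀ (by norm_num), h.neg_one_zpow, one_mul]

lemma sub_add_mem_of_add_mem_image_add {G : Type*} [AddCommGroup G] {D : Set G} {x y t : G}
    (h : x + y ∈ (fun z => z + t) '' D) : x - t + y ∈ D := by
  rw [Set.image_add_right] at h
  simpa [sub_eq_add_neg, add_right_comm] using h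

lemma sub_sub_mem_of_sub_mem_image_add {G : Type*} [AddCommGroup G] {D : Set G} {x y t : G}
    (h : x - y ∈ (fun z => z + t) '' D) : x - t - y ∈ D := by
  rw [Set.image_add_right] at h
  simpa [sub_eq_add_neg, add_right_comm] using h

lemma ip_comm (x y : V8) : ip x y = ip y x := dotProduct_comm x y

lemma ip_phi8_phi8 : ip phi8 phi8 = 2 := by
  norm_num [ip, phi8]

lemma ip_of_isIntVec {p q : V8} (hp : IsIntVec p) (hq : IsIntVec q) :
    ∃ n : ℤ, ip p q = n := by
  choose n hn using hp
  choose m hm using hq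
  exact ⟨∑ i, n i * m i, by simp [ip, hn, hm]⟩

lemma ip_of_isIntVec_of_mem_E8lat {p w : V8} (hp : IsIntVec p)
    (hpφ : ∃ n : ℤ, ip phi8 p = n) (hw : w ∈ E8lat) : ∃ n : ℤ, ip p w = n := by
  rcases hw.1 with hw | hw
  · exact ip_of_isIntVec hp hw
  · obtain ⟨k, hk⟩ := ip_of_isIntVec hp hw
    obtain ⟨n, hn⟩ := hpφ
    refine ⟨k + n, ?_⟩
    rw [ip_eq_dotProduct, ← sub_add_cancel w phi8, dotProduct_add, ← ip_eq_dotProduct,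
      ← ip_eq_dotProduct, hk, ip_comm, hn, Int.cast_add]

lemma ip_of_mem_E8lat {u w : V8} (hu : u ∈ E8lat) (hw : w ∈ E8lat) :
    ∃ n : ℤ, ip u w = n := by
  obtain ⟨hu | hu, n, hn⟩ := hu
  · exact ip_of_isIntVec_of_mem_E8lat hu ⟨n, hn⟩ hw
  · have hφ : ip phi8 (u - phi8) = ((n - 2 : ℤ) : ℂ) := by
      rw [ip_eq_dotProduct, dotProduct_sub, ← ip_eq_dotProduct, ← ip_eq_dotProduct, hn,
        ip_phi8_phi8]
      push_cast; ring
    obtain ⟨k, hk⟩ := ip_of_isIntVec_of_mem_E8lat hu ⟨_, hφ⟩ hw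
    obtain ⟨m, hm⟩ := hw.2
    refine ⟨k + m, ?_⟩
    rw [← sub_add_cancel u phi8, ip_eq_dotProduct, add_dotProduct, ← ip_eq_dotProduct,
      ← ip_eq_dotProduct, hk, hm, Int.cast_add]

lemma eFun_add (x y : ℂ) : eFun (x + y) = eFun x * eFun y := by
  simp [eFun, mul_add, Complex.exp_add]

section QuasiPeriodicity

variable {br : ℂ → ℂ} {ε η ω : ℂ}

def qpFactor (ε η ω : ℂ) (n : ℤ) (ζ : ℂ) : ℂ :=
  ε ^ n * eFun (η * (n * ζ + n ^ 2 * ω / 2))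

lemma qpFactor_add (hε : ε ≠ 0) (m n : ℤ) (ζ : ℂ) :
    qpFactor ε η ω (m + n) ζ = qpFactor ε η ω m (ζ + n * ω) * qpFactor ε η ω n ζ := by
  have hexp : η * (((m + n : ℤ) : ℂ) * ζ + ((m + n : ℤ) : ℂ) ^ 2 * ω / 2) =
      η * (m * (ζ + n * ω) + (m : ℂ) ^ 2 * ω / 2) + η * (n * ζ + (n : ℂ) ^ 2 * ω / 2) := by
    push_cast; ring
  rw [qpFactor, qpFactor, qpFactor, zpow_add₀ hε, hexp, eFun_add]
  ring

lemma qpFactor_ne_zero (hε : ε ≠ 0) (n : ℤ) (ζ : ℂ) : qpFactor ε η ω n ζ ≠ 0 :=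
  mul_ne_zero (zpow_ne_zero n hε) (Complex.exp_ne_zero _)

lemma apply_add_int_mul (hε : ε ≠ 0)
    (hqp : ∀ ζ : ℂ, br (ζ + ω) = ε * eFun (η * (ζ + ω / 2)) * br ζ) (n : ℤ) (ζ : ℂ) :
    br (ζ + n * ω) = qpFactor ε η ω n ζ * br ζ := by
  have hqp1 (ζ : ℂ) : br (ζ + ω) = qpFactor ε η ω 1 ζ * br ζ := by
    simp [qpFactor, hqp]
  -- both sides pick up the same nonzero factor `qpFactor 1 (ζ + nω)` when `n` increases by one
  have step (n : ℤ) (ζ : ℂ) :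
      br (ζ + (n + 1 : ℤ) * ω) = qpFactor ε η ω (n + 1) ζ * br ζ ↔
        br (ζ + n * ω) = qpFactor ε η ω n ζ * br ζ := by
    have harg : ζ + ((n + 1 : ℤ) : ℂ) * ω = ζ + n * ω + ω := by push_cast; ring
    rw [harg, hqp1, add_comm n 1, qpFactor_add hε, mul_assoc]
    exact mul_right_inj' (qpFactor_ne_zero hε 1 _)
  induction n using Int.induction_on generalizing ζ with
  | zero => simp [qpFactor, eFun]
  | succ n ih => exact (step n ζ).2 (ih ζ)
  | pred n ih => exact (step (-n - 1) ζ).1 (by rw [sub_add_cancel]; exact ih ζ)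

end QuasiPeriodicity

section Gauge

variable {br : ℂ → ℂ} {δ ε η ω : ℂ} {τ : V8 → ℂ} {v x : V8}

def hirotaTerm (br : ℂ → ℂ) (δ : ℂ) (τ : V8 → ℂ) (m u w x : V8) : ℂ :=
  br (ip (u + w) x) * br (ip (u - w) x) * (τ (x + δ • m) * τ (x - δ • m))

lemma hirotaEq_iff_hirotaTerm (a b c : V8) :
    HirotaEq br δ τ a b c x ↔
      hirotaTerm br δ τ a b c x + hirotaTerm br δ τ b c a x + hirotaTerm br δ τ c a b x = 0 :=
  Iff.rfl

/-- The exponent `S(x; v, ω)` of the gauge factor. -/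
def gaugePhase (η δ ω : ℂ) (v x : V8) : ℂ :=
  η / (2 * δ ^ 2) * ip v x * ip x (x - ω • v)

def gaugeShift (η δ ω : ℂ) (v : V8) (τ : V8 → ℂ) (x : V8) : ℂ :=
  eFun (gaugePhase η δ ω v x) * τ (x - ω • v)

def gaugeWeight (ω : ℂ) (v x y : V8) : ℂ :=
  2 * ip y v * ip y x - ω * ip y v ^ 2

lemma gaugePhase_add_smul_add_gaugePhase_sub_smul (hδ : δ ≠ 0) {m : V8} (hm : ip m m = 1) :
    gaugePhase η δ ω v (x + δ • m) + gaugePhase η δ ω v (x - δ • m) =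
      η * (ip v x * ip x (x - ω • v) / δ ^ 2 + ip v x + gaugeWeight ω v x m) := by
  simp only [gaugePhase, gaugeWeight, ip_eq_dotProduct] at hm ⊢
  simp only [dotProduct_add, dotProduct_sub, add_dotProduct, sub_dotProduct, dotProduct_smul,
    smul_dotProduct, smul_eq_mul, hm, dotProduct_comm x m, dotProduct_comm m v,
    dotProduct_comm x v]
  field_simp
  ring

lemma apply_ip_add_mul_apply_ip_sub (hε : ε ≠ 0)
    (hqp : ∀ ζ : ℂ, br (ζ + ω) = ε * eFun (η * (ζ + ω / 2)) * br ζ) {u w : V8} {N₁ N₂ : ℤ}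
    (hN₁ : ip (u + w) v = N₁) (hN₂ : ip (u - w) v = N₂) :
    br (ip (u + w) x) * br (ip (u - w) x) =
      ε ^ (N₁ + N₂) * eFun (η * (gaugeWeight ω v x u + gaugeWeight ω v x w)) *
        (br (ip (u + w) (x - ω • v)) * br (ip (u - w) (x - ω • v))) := by
  have hshift (y : V8) : ip y x = ip y (x - ω • v) + ip y v * ω := by
    simp only [ip_eq_dotProduct, dotProduct_sub, dotProduct_smul, smul_eq_mul]
    ring
  have hexp : eFun (η * (N₁ * ip (u + w) (x - ω • v) + (N₁ : ℂ) ^ 2 * ω / 2)) *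
      eFun (η * (N₂ * ip (u - w) (x - ω • v) + (N₂ : ℂ) ^ 2 * ω / 2)) =
        eFun (η * (gaugeWeight ω v x u + gaugeWeight ω v x w)) := by
    rw [← eFun_add, ← hN₁, ← hN₂, gaugeWeight, gaugeWeight]
    congr 1
    simp only [ip_eq_dotProduct, dotProduct_sub, dotProduct_smul, add_dotProduct,
      sub_dotProduct, smul_eq_mul]
    ring
  rw [hshift (u + w), hshift (u - w), hN₁, hN₂, apply_add_int_mul hε hqp,
    apply_add_int_mul hε hqp, qpFactor, qpFactor, zpow_add₀ hε, ← hexp]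
  ring

lemma hirotaTerm_gaugeShift (hδ : δ ≠ 0) (hε : ε ≠ 0)
    (hqp : ∀ ζ : ℂ, br (ζ + ω) = ε * eFun (η * (ζ + ω / 2)) * br ζ) {m u w : V8}
    (hm : ip m m = 1) {N₁ N₂ : ℤ} (hN₁ : ip (u + w) v = N₁) (hN₂ : ip (u - w) v = N₂) :
    hirotaTerm br δ (gaugeShift η δ ω v τ) m u w x =
      ε ^ (N₁ + N₂) * eFun (η * (ip v x * ip x (x - ω • v) / δ ^ 2 + ip v x +
        (gaugeWeight ω v x m + gaugeWeight ω v x u + gaugeWeight ω v x w))) *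
        hirotaTerm br δ τ m u w (x - ω • v) := by
  have hsplit : η * (ip v x * ip x (x - ω • v) / δ ^ 2 + ip v x +
      (gaugeWeight ω v x m + gaugeWeight ω v x u + gaugeWeight ω v x w)) =
        η * (ip v x * ip x (x - ω • v) / δ ^ 2 + ip v x + gaugeWeight ω v x m) +
          η * (gaugeWeight ω v x u + gaugeWeight ω v x w) := by
    ring
  rw [hsplit, eFun_add, ← gaugePhase_add_smul_add_gaugePhase_sub_smul hδ hm, eFun_add]
  rw [hirotaTerm, hirotaTerm, apply_ip_add_mul_apply_ip_sub hε hqp hN₁ hN₂, gaugeShift,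
    gaugeShift, add_sub_right_comm x, sub_right_comm x]
  ring

lemma even_add_sub_add_of_ip_eq_intCast {u w u' w' : V8} {N₁ N₂ N₁' N₂' k : ℤ}
    (hN₁ : ip (u + w) v = N₁) (hN₂ : ip (u - w) v = N₂) (hN₁' : ip (u' + w') v = N₁')
    (hN₂' : ip (u' - w') v = N₂') (hk : ip (u - u') v = k) :
    Even (N₁ + N₂ - (N₁' + N₂')) := by
  have h : ((N₁ + N₂ - (N₁' + N₂') : ℤ) : ℂ) = ((k + k : ℤ) : ℂ) := by
    push_cast
    rw [← hN₁, ← hN₂, ← hN₁', ← hN₂', ← hk]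
    simp only [ip_eq_dotProduct, add_dotProduct, sub_dotProduct]
    ring
  exact ⟨k, by exact_mod_cast h⟩

lemma hirotaEq_gaugeShift {a b c : V8} (hδ : δ ≠ 0) (hε : ε = 1 ∨ ε = -1)
    (hqp : ∀ ζ : ℂ, br (ζ + ω) = ε * eFun (η * (ζ + ω / 2)) * br ζ) (hv : v ∈ E8lat)
    (habc : IsC3Triple a b c) (H : HirotaEq br δ τ a b c (x - ω • v)) :
    HirotaEq br δ (gaugeShift η δ ω v τ) a b c x := by
  obtain ⟨haa, hbb, hcc, -, -, -, hab, hab', hac, hac', hbc, hbc', -, -, -⟩ := habc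
  have hε0 : ε ≠ 0 := by rcases hε with rfl | rfl <;> norm_num
  obtain ⟨nab, hnab⟩ := ip_of_mem_E8lat hab hv
  obtain ⟨nab', hnab'⟩ := ip_of_mem_E8lat hab' hv
  obtain ⟨nac, hnac⟩ := ip_of_mem_E8lat hac hv
  obtain ⟨nac', hnac'⟩ := ip_of_mem_E8lat hac' hv
  obtain ⟨nbc, hnbc⟩ := ip_of_mem_E8lat hbc hv
  obtain ⟨nbc', hnbc'⟩ := ip_of_mem_E8lat hbc' hv
  have hnca : ip (c + a) v = nac := by rw [add_comm]; exact hnac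
  have hnca' : ip (c - a) v = ((-nac' : ℤ) : ℂ) := by
    rw [← neg_sub, ip_eq_dotProduct, neg_dotProduct, ← ip_eq_dotProduct, hnac', Int.cast_neg]
  have hsign₂ : ε ^ (nbc + nbc') = ε ^ (nac + -nac') :=
    zpow_eq_zpow_of_even_sub hε
      (even_add_sub_add_of_ip_eq_intCast hnbc hnbc' hnca hnca' hnbc')
  have hsign₃ : ε ^ (nab + nab') = ε ^ (nbc + nbc') :=
    zpow_eq_zpow_of_even_sub hε
      (even_add_sub_add_of_ip_eq_intCast hnab hnab' hnbc hnbc' hnab')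
  have hweight₂ : gaugeWeight ω v x b + gaugeWeight ω v x c + gaugeWeight ω v x a =
      gaugeWeight ω v x a + gaugeWeight ω v x b + gaugeWeight ω v x c := by ring
  have hweight₃ : gaugeWeight ω v x c + gaugeWeight ω v x a + gaugeWeight ω v x b =
      gaugeWeight ω v x a + gaugeWeight ω v x b + gaugeWeight ω v x c := by ring
  rw [hirotaEq_iff_hirotaTerm] at H ⊢
  rw [hirotaTerm_gaugeShift hδ hε0 hqp haa hnbc hnbc',
    hirotaTerm_gaugeShift hδ hε0 hqp hbb hnca hnca',
    hirotaTerm_gaugeShift hδ hε0 hqp hcc hnab hnab', ← hsign₂, hsign₃, hweight₂, hweight₃]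
  linear_combination ε ^ (nbc + nbc') * eFun (η * (ip v x * ip x (x - ω • v) / δ ^ 2 + ip v x +
    (gaugeWeight ω v x a + gaugeWeight ω v x b + gaugeWeight ω v x c))) * H

end Gauge

theorem statement5_general (br : ℂ → ℂ) (δ : ℂ) (hδ : δ ≠ 0)
    (D : Set V8)
    (τ : V8 → ℂ) (hτ : IsORGTau br δ D τ)
    (ω η ε : ℂ) (hε : ε = 1 ∨ ε = -1)
    (hqp : ∀ ζ : ℂ, br (ζ + ω) = ε * eFun (η * (ζ + ω / 2)) * br ζ)
    (v : V8) (hv : v ∈ E8lat) :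
    IsORGTau br δ ((fun x => x + ω • v) '' D)
      (fun x => eFun (η / (2 * δ ^ 2) * ip v x * ip x (x - ω • v)) * τ (x - ω • v)) := by
  intro a b c habc x hxa hxa' hxb hxb' hxc hxc'
  exact hirotaEq_gaugeShift hδ hε hqp hv habc (hτ a b c habc (x - ω • v)
    (sub_add_mem_of_add_mem_image_add hxa) (sub_sub_mem_of_sub_mem_image_add hxa')
    (sub_add_mem_of_add_mem_image_add hxb) (sub_sub_mem_of_sub_mem_image_add hxb')
    (sub_add_mem_of_add_mem_image_add hxc) (sub_sub_mem_of_sub_mem_image_add hxc'))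

/-- Theorem 2.4 (3): translation of an ORG τ-function by `vω` (`v ∈ P`, `ω` a
quasi-period of `[·]` with factor `[ζ+ω] = ε·e(η(ζ+ω/2))·[ζ]`, `ε = ±1`), corrected by
the gauge factor `e(S(x;v,ω))` with `S(x;v,ω) = (η/(2δ²))⟨v,x⟩⟨x,x−vω⟩`, is an
ORG τ-function on `D + vω`. -/
theorem statement5 (br : ℂ → ℂ) (hbr_ne : br ≠ 0) (hbr_ent : Differentiable ℂ br)
    (hbr3 : ThreeTermRel br) (δ : ℂ) (hδ : δ ≠ 0)
    (D : Set V8) (hD : PShiftInvariant δ D)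
    (τ : V8 → ℂ) (hτ : IsORGTau br δ D τ)
    (ω η ε : ℂ) (hε : ε = 1 ∨ ε = -1)
    (hqp : ∀ ζ : ℂ, br (ζ + ω) = ε * eFun (η * (ζ + ω / 2)) * br ζ)
    (v : V8) (hv : v ∈ E8lat) :
    IsORGTau br δ ((fun x => x + ω • v) '' D)
      (fun x => eFun (η / (2 * δ ^ 2) * ip v x * ip x (x - ω • v)) * τ (x - ω • v)) :=
  statement5_general br δ hδ D τ hτ ω η ε hε hqp v hv
end
end

section
/- If [·] : ℂ → ℂ is a nonzero entire function satisfying the three-term relation, then [·] is an odd function: [0] = 0 and [−z] = −[z] for all z ∈ ℂ. -/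
/-!
Putting `z = α = β = γ = 0` in the relation gives `3 [0]⁴ = 0`. With `[0] = 0`, the choice
`(z, α, β, γ) = (x, x, 0, x - d)` collapses it to `[x]² [2x - d] ([d] + [-d]) = 0` for all `x`.
Entire functions form an integral domain, so if `[d] + [-d] ≠ 0` then `[·]` vanishes identically.
-/

noncomputable section

open Set

namespace ThreeTermRel

variable {br : ℂ → ℂ}

theorem apply_zero (h : ThreeTermRel br) : br 0 = 0 := by
  have := h 0 0 0 0
  simp only [add_zero, sub_zero] at this
  exact pow_eq_zero_iff (n := 4) (by norm_num) |>.1 (by linear_combination this / 3)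

theorem sq_mul_mul_add_neg_eq_zero (h : ThreeTermRel br) (x d : ℂ) :
    br x ^ 2 * br (2 * x - d) * (br d + br (-d)) = 0 := by
  have := h x x 0 (x - d)
  rw [sub_self, h.apply_zero] at this
  ring_nf at this ⊢
  linear_combination this

end ThreeTermRel

/-- A nonzero entire function satisfying the three-term relation is odd. -/
theorem statement8 (br : ℂ → ℂ) (hbr_ne : br ≠ 0) (hbr_ent : Differentiable ℂ br)
    (hbr3 : ThreeTermRel br) :
    br 0 = 0 ∧ ∀ z : ℂ, br (-z) = -br z := by
  refine ⟨hbr3.apply_zero, fun u => ?_⟩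
  by_contra hu
  have hsum : br u + br (-u) ≠ 0 := fun h => hu (by linear_combination h)
  have hvanish (x : ℂ) (_ : x ∈ univ) : br x ^ 2 * br (2 * x - u) = 0 :=
    (mul_eq_zero.1 (hbr3.sq_mul_mul_add_neg_eq_zero x u)).resolve_right hsum
  have hshift : Differentiable ℂ fun x => br (2 * x - u) :=
    hbr_ent.comp ((differentiable_id.const_mul 2).sub_const u)
  rcases AnalyticOnNhd.eq_zero_or_eq_zero_of_mul_eq_zero (fun x _ => (hbr_ent.pow 2).analyticAt x)
    (fun x _ => hshift.analyticAt x) hvanish isPreconnected_univ with h | h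
  · exact hbr_ne <| funext fun w => pow_eq_zero_iff two_ne_zero |>.1 (h w trivial)
  · refine hbr_ne <| funext fun w => ?_
    simpa [show 2 * ((w + u) / 2) - u = w by ring] using h ((w + u) / 2) trivial
end
end

section
/- Let ψ : ℂ^8 → ℂ be an arbitrary function, let a_0, a_1, a_2 ∈ ℂ^8 and δ ∈ ℂ. For each integer n ≥ 1 define K^{(n)}(x) = det( ψ( x − (n−1)a_0δ + (n+1−i−j)a_1δ + (j−i)a_2δ ) )_{i,j=1,...,n}, and set K^{(0)}(x) = 1 for all x. Then for every n ≥ 1 and every x ∈ ℂ^8: K^{(n−1)}(x − a_0δ)·K^{(n+1)}(x + a_0δ) = K^{(n)}(x + a_1δ)·K^{(n)}(x − a_1δ) − K^{(n)}(x + a_2δ)·K^{(n)}(x − a_2δ). (This is the 2-directional Casorati determinant solution of the Toda-type recursion underlying Theorem 4.2, a consequence of the Desnanot–Jacobi/Lewis Carroll determinant identity.) -/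
/-!
The matrix `C` with `det C = K⁽ⁿ⁺¹⁾(x + a₀δ)` has as its four corner `n × n` minors the
determinants `K⁽ⁿ⁾(x ± a₁δ)`, `K⁽ⁿ⁾(x ± a₂δ)`, and as its central `(n-1) × (n-1)` minor
`K⁽ⁿ⁻¹⁾(x - a₀δ)`: moving a block of rows (of columns) down by one step shifts the argument
by `-(a₁ + a₂)δ` (by `-(a₁ - a₂)δ`). The recursion is therefore the Desnanot–Jacobi identity
for `C`. That identity is Jacobi's theorem on a `2 × 2` principal block of the adjugate:
replacing two rows of the identity by the corresponding rows of `adj A` gives a matrix `B`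
with `B * A` block triangular, so `det A * det (adj A)₁₁ = det A ^ 2 * det A₂₂`, and `det A`
cancels for the generic matrix over `ℤ[Xᵢⱼ]`.
-/

noncomputable section

/-- The 2-directional Casorati determinant
`K⁽ⁿ⁾(x) = det(ψ(x − (n−1)a₀δ + (n+1−i−j)a₁δ + (j−i)a₂δ))_{i,j=1,…,n}`,
with `K⁽⁰⁾(x) = 1` (determinant of the empty matrix). -/
def Kdet (ψ : V8 → ℂ) (a0 a1 a2 : V8) (δ : ℂ) (n : ℕ) (x : V8) : ℂ :=
  Matrix.det (Matrix.of fun i j : Fin n =>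
    ψ (x - (((n : ℂ) - 1) * δ) • a0 +
        (((n : ℂ) - 1 - (i.val : ℂ) - (j.val : ℂ)) * δ) • a1 +
        (((j.val : ℂ) - (i.val : ℂ)) * δ) • a2))

namespace Matrix

variable {R ι κ : Type*} [CommRing R] [Fintype ι] [Fintype κ] [DecidableEq ι] [DecidableEq κ]

theorem det_mul_det_toBlocks₁₁_adjugate (A : Matrix (ι ⊕ κ) (ι ⊕ κ) R) :
    A.det * A.adjugate.toBlocks₁₁.det = A.det ^ Fintype.card ι * A.toBlocks₂₂.det := by
  have h := A.adjugate_mul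
  generalize A.adjugate = C at h ⊢
  rw [← fromBlocks_toBlocks C, ← fromBlocks_toBlocks A, fromBlocks_multiply,
    ← fromBlocks_one, fromBlocks_smul, fromBlocks_inj, fromBlocks_toBlocks] at h
  set B := fromBlocks C.toBlocks₁₁ C.toBlocks₁₂ 0 (1 : Matrix κ κ R)
  have hBA : B * A = fromBlocks (A.det • 1) 0 A.toBlocks₂₁ A.toBlocks₂₂ := by
    conv_lhs => rw [← fromBlocks_toBlocks A, fromBlocks_multiply]
    simp [h.1, h.2.1]
  have hdet := congrArg det hBA
  rw [det_mul, det_fromBlocks_zero₂₁, det_fromBlocks_zero₁₂, det_one, mul_one, det_smul,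
    det_one, mul_one] at hdet
  rw [mul_comm, hdet]

theorem det_toBlocks₁₁_adjugate [Nonempty ι] (A : Matrix (ι ⊕ κ) (ι ⊕ κ) R) :
    A.adjugate.toBlocks₁₁.det = A.det ^ (Fintype.card ι - 1) * A.toBlocks₂₂.det := by
  let X := mvPolynomialX (ι ⊕ κ) (ι ⊕ κ) ℤ
  have hX : X.adjugate.toBlocks₁₁.det = X.det ^ (Fintype.card ι - 1) * X.toBlocks₂₂.det := by
    refine mul_left_cancel₀ (det_mvPolynomialX_ne_zero (ι ⊕ κ) ℤ) ?_
    rw [det_mul_det_toBlocks₁₁_adjugate, ← mul_assoc, ← pow_succ',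
      Nat.sub_add_cancel Fintype.card_pos]
  let f := MvPolynomial.eval₂Hom (Int.castRingHom R) fun p : (ι ⊕ κ) × (ι ⊕ κ) => A p.1 p.2
  have hA : f.mapMatrix X = A := mvPolynomialX_map_eval₂ _ A
  calc A.adjugate.toBlocks₁₁.det = f X.adjugate.toBlocks₁₁.det := by
        rw [RingHom.map_det, ← hA, ← RingHom.map_adjugate]; rfl
    _ = A.det ^ (Fintype.card ι - 1) * A.toBlocks₂₂.det := by
        rw [hX, map_mul, map_pow, RingHom.map_det, RingHom.map_det, hA]
        exact congrArg (fun M => _ * (toBlocks₂₂ M).det) hA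

theorem det_mul_det_submatrix_succ_castSucc {m : ℕ} (A : Matrix (Fin (m + 2)) (Fin (m + 2)) R) :
    A.det * (A.submatrix (fun i : Fin m => i.succ.castSucc) fun i => i.succ.castSucc).det =
      (A.submatrix Fin.castSucc Fin.castSucc).det * (A.submatrix Fin.succ Fin.succ).det -
        (A.submatrix Fin.castSucc Fin.succ).det * (A.submatrix Fin.succ Fin.castSucc).det := by
  have he : Function.Bijective
      (Sum.elim ![0, Fin.last (m + 1)] fun i : Fin m => i.succ.castSucc) := by
    refine (Fintype.bijective_iff_injective_and_card _).2 ⟨?_, by simp; omega⟩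
    rintro (a | a) (b | b) h
    · fin_cases a <;> fin_cases b <;> simp_all [Fin.ext_iff]
    · fin_cases a <;> simp [Fin.ext_iff] at h; omega
    · fin_cases b <;> simp [Fin.ext_iff] at h; omega
    · simpa [Fin.ext_iff] using h
  let e := Equiv.ofBijective _ he
  have hadj : A.adjugate 0 0 * A.adjugate (Fin.last _) (Fin.last _) -
      A.adjugate 0 (Fin.last _) * A.adjugate (Fin.last _) 0 =
        A.det * (A.submatrix (fun i : Fin m => i.succ.castSucc) fun i => i.succ.castSucc).det := by
    have h := det_toBlocks₁₁_adjugate (A.submatrix e e)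
    rw [adjugate_submatrix_equiv_self, det_submatrix_equiv_self, det_fin_two] at h
    simpa [e, toBlocks₁₁, toBlocks₂₂, submatrix] using h
  simp only [adjugate_fin_succ_eq_det_submatrix, Fin.succAbove_zero, Fin.succAbove_last,
    Fin.val_zero, Fin.val_last] at hadj
  have hsign : ((-1 : R) ^ (m + 1)) * (-1) ^ (m + 1) = 1 := by rw [← mul_pow]; simp
  linear_combination -hadj + ((A.submatrix Fin.castSucc Fin.castSucc).det *
    (A.submatrix Fin.succ Fin.succ).det - (A.submatrix Fin.castSucc Fin.succ).det *
      (A.submatrix Fin.succ Fin.castSucc).det) * hsign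

end Matrix

open Matrix

section Casorati

variable {V : Type*} [AddCommGroup V] [Module ℂ V]

def casoratiMatrix (ψ : V → ℂ) (a0 a1 a2 : V) (δ : ℂ) (n : ℕ) (x : V) :
    Matrix (Fin n) (Fin n) ℂ :=
  Matrix.of fun i j => ψ (x - (((n : ℂ) - 1) * δ) • a0 +
    (((n : ℂ) - 1 - (i.val : ℂ) - (j.val : ℂ)) * δ) • a1 + (((j.val : ℂ) - (i.val : ℂ)) * δ) • a2)

theorem Kdet_eq_det_casoratiMatrix (ψ : V8 → ℂ) (a0 a1 a2 : V8) (δ : ℂ) (n : ℕ) (x : V8) :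
    Kdet ψ a0 a1 a2 δ n x = (casoratiMatrix ψ a0 a1 a2 δ n x).det := rfl

theorem casoratiMatrix_submatrix {ψ : V → ℂ} {a0 a1 a2 : V} {δ : ℂ} {N n : ℕ} {x : V}
    {f g : Fin n → Fin N} (r c : ℕ) (hf : ∀ i, (f i : ℕ) = i + r) (hg : ∀ j, (g j : ℕ) = j + c) :
    (casoratiMatrix ψ a0 a1 a2 δ N x).submatrix f g =
      casoratiMatrix ψ a0 a1 a2 δ n (x - (((N : ℂ) - n) * δ) • a0 +
        (((N : ℂ) - n - r - c) * δ) • a1 + (((c : ℂ) - r) * δ) • a2) := by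
  ext i j
  simp only [submatrix_apply, casoratiMatrix, of_apply, hf, hg]
  congr 1
  push_cast
  module

end Casorati

/-- The 2-directional Casorati determinants solve the Toda-type recursion
`K⁽ⁿ⁻¹⁾(x−a₀δ)·K⁽ⁿ⁺¹⁾(x+a₀δ) = K⁽ⁿ⁾(x±a₁δ) − K⁽ⁿ⁾(x±a₂δ)`
(a consequence of the Desnanot–Jacobi/Lewis Carroll identity). -/
theorem statement10 (ψ : V8 → ℂ) (a0 a1 a2 : V8) (δ : ℂ) (n : ℕ) (hn : 1 ≤ n) (x : V8) :
    Kdet ψ a0 a1 a2 δ (n - 1) (x - δ • a0) * Kdet ψ a0 a1 a2 δ (n + 1) (x + δ • a0) =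
      Kdet ψ a0 a1 a2 δ n (x + δ • a1) * Kdet ψ a0 a1 a2 δ n (x - δ • a1) -
        Kdet ψ a0 a1 a2 δ n (x + δ • a2) * Kdet ψ a0 a1 a2 δ n (x - δ • a2) := by
  obtain ⟨m, rfl⟩ : ∃ m, n = m + 1 := ⟨n - 1, by omega⟩
  have key :=
    det_mul_det_submatrix_succ_castSucc (casoratiMatrix ψ a0 a1 a2 δ (m + 2) (x + δ • a0))
  rw [casoratiMatrix_submatrix (f := fun i : Fin m => i.succ.castSucc) 1 1 (fun _ => rfl)
      (fun _ => rfl),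
    casoratiMatrix_submatrix (f := Fin.castSucc) 0 0 (fun _ => rfl) (fun _ => rfl),
    casoratiMatrix_submatrix (f := Fin.succ) 1 1 (fun _ => rfl) (fun _ => rfl),
    casoratiMatrix_submatrix (f := Fin.castSucc) 0 1 (fun _ => rfl) (fun _ => rfl),
    casoratiMatrix_submatrix (f := Fin.succ) 1 0 (fun _ => rfl) (fun _ => rfl)] at key
  simp only [Kdet_eq_det_casoratiMatrix, Nat.add_sub_cancel]
  rw [mul_comm]
  convert key using 5 <;> push_cast <;> module
end
end
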